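/- For n ≥ 1, the function 𝒥_{2n+1}(x) := −(1/(2n+1))·Σ_{k=1}^{2n+1} [tanh(x·cos(kπ/(2n+1)))/cos(kπ/(2n+1))]·cos(2kπ/(2n+1)) is increasing on [0,∞); in particular its derivative satisfies (2n+1)·𝒥'_{2n+1}(x) ≥ −1/cosh²(x) + 1/cosh²(x/√2) ≥ 0 for all x ≥ 0. -/

import Mathlib

open Real

lemma tanh_hasDerivAt (y : ℝ) : HasDerivAt Real.tanh (1 / Real.cosh y ^ 2) y := by
  have h := (Real.hasDerivAt_sinh y).div (Real.hasDerivAt_cosh y) (Real.cosh_pos y).ne'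
  have heq : Real.tanh = fun z => Real.sinh z / Real.cosh z :=
    funext fun z => Real.tanh_eq_sinh_div_cosh z
  rw [heq]
  refine h.congr_deriv ?_
  have h1 := Real.cosh_sq_sub_sinh_sq y
  congr 1
  nlinarith [h1]

lemma cos_ne_zero_aux (n k : ℕ) : Real.cos (k * Real.pi / (2 * n + 1)) ≠ 0 := by
  intro h
  rw [Real.cos_eq_zero_iff] at h
  obtain ⟨m, hm⟩ := h
  have hN : (2 * (n:ℝ) + 1) ≠ 0 := by positivity
  have hπ : Real.pi ≠ 0 := Real.pi_ne_zero
  have h2 : (2 * (k:ℝ)) = (2*m+1) * (2*n+1) := by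
    field_simp at hm
    have := Real.pi_pos
    nlinarith [hm]
  have h3 : (2 * (k:ℤ)) = (2*m+1) * (2*n+1) := by exact_mod_cast h2
  have h4 : (2*(m:ℤ)+1) % 2 = 1 := by omega
  have h5 : (2*(n:ℤ)+1) % 2 = 1 := by omega
  have h6 : ((2*(m:ℤ)+1) * (2*(n:ℤ)+1)) % 2 = 1 := by rw [Int.mul_emod, h4, h5]; decide
  omega

lemma sum_cos_range (N : ℕ) (hN : 2 ≤ N) :
    ∑ k ∈ Finset.range N, Real.cos (2 * k * Real.pi / N) = 0 := by
  have hN0 : (N:ℝ) ≠ 0 := by positivity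
  set θ : ℝ := 2 * Real.pi / N with hθ
  have hterm : ∀ k : ℕ, Real.cos (2 * k * Real.pi / N) =
      (Complex.exp (θ * Complex.I) ^ k).re := by
    intro k
    rw [← Complex.exp_nat_mul]
    have : (k : ℂ) * (θ * Complex.I) = ((k * θ : ℝ) : ℂ) * Complex.I := by push_cast; ring
    rw [this, Complex.exp_ofReal_mul_I_re]
    congr 1
    rw [hθ]
    field_simp
  simp only [hterm]
  rw [← Complex.re_sum]
  have hζ : Complex.exp (θ * Complex.I) ≠ 1 := by
    intro hone
    rw [Complex.exp_eq_one_iff] at hone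
    obtain ⟨m, hm⟩ := hone
    have hI : (Complex.I : ℂ) ≠ 0 := Complex.I_ne_zero
    have hcc : (θ:ℂ) * Complex.I = ((m:ℂ)*(2*Real.pi)) * Complex.I := by rw [hm]; ring
    have : (θ : ℂ) = m * (2 * Real.pi) := mul_right_cancel₀ hI hcc
    have hθr : θ = m * (2 * Real.pi) := by exact_mod_cast this
    rw [hθ] at hθr
    have hπ := Real.pi_pos
    have : (1 : ℝ) = m * N := by
      field_simp at hθr
      nlinarith [hθr]
    have h1 : (1 : ℤ) = m * N := by exact_mod_cast this
    have hN2 : (2:ℤ) ≤ N := by exact_mod_cast hN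
    rcases le_or_gt m 0 with h|h
    · nlinarith
    · nlinarith
  rw [geom_sum_eq hζ]
  have hpow : Complex.exp (θ * Complex.I) ^ N = 1 := by
    rw [← Complex.exp_nat_mul, Complex.exp_eq_one_iff]
    refine ⟨1, ?_⟩
    have hNC : (N:ℂ) ≠ 0 := by exact_mod_cast hN0
    push_cast [hθ]
    field_simp
  rw [hpow]
  simp

lemma sum_cos_Icc (n : ℕ) (hn : 1 ≤ n) :
    ∑ k ∈ Finset.Icc 1 (2*n), Real.cos (2 * k * Real.pi / (2 * n + 1)) = -1 := by
  have h := sum_cos_range (2*n+1) (by omega)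
  have hset : Finset.range (2*n+1) = insert 0 (Finset.Icc 1 (2*n)) := by
    ext x; simp only [Finset.mem_range, Finset.mem_insert, Finset.mem_Icc]; omega
  rw [hset, Finset.sum_insert (by simp)] at h
  have hcast : ((2*n+1 : ℕ) : ℝ) = 2*(n:ℝ)+1 := by push_cast; ring
  rw [hcast] at h
  simp only [Nat.cast_zero, mul_zero, zero_mul, zero_div, Real.cos_zero] at h
  linarith

lemma key_ineq (x c : ℝ) (hx : 0 ≤ x) :
    (2*c^2 - 1) * (1 / Real.cosh (x*c)^2) ≤ (2*c^2 - 1) * (1 / Real.cosh (x / Real.sqrt 2)^2) := by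
  have hs2 : (0:ℝ) < Real.sqrt 2 := by positivity
  have hsq2 : Real.sqrt 2 ^ 2 = 2 := Real.sq_sqrt (by norm_num)
  rcases le_or_gt (1:ℝ) (2*c^2) with h | h
  · apply mul_le_mul_of_nonneg_left ?_ (by linarith)
    have habs : x / Real.sqrt 2 ≤ |x*c| := by
      rw [abs_mul, abs_of_nonneg hx]
      have hc : 1/Real.sqrt 2 ≤ |c| := by
        have h1 : Real.sqrt (1/2) ≤ Real.sqrt (c^2) := Real.sqrt_le_sqrt (by linarith)
        rw [Real.sqrt_sq_eq_abs] at h1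
        have h2 : Real.sqrt (1/2) = 1 / Real.sqrt 2 := by
          rw [one_div, one_div, Real.sqrt_inv]
        linarith
      calc x / Real.sqrt 2 = x * (1/Real.sqrt 2) := by ring
        _ ≤ x * |c| := by apply mul_le_mul_of_nonneg_left hc hx
    have hcosh : Real.cosh (x / Real.sqrt 2) ≤ Real.cosh (x*c) := by
      rw [Real.cosh_le_cosh]
      rwa [abs_of_nonneg (by positivity : (0:ℝ) ≤ x / Real.sqrt 2)]
    gcongr
  · apply mul_le_mul_of_nonpos_left ?_ (by linarith)
    have habs : |x*c| ≤ x / Real.sqrt 2 := by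
      rw [abs_mul, abs_of_nonneg hx]
      have hc : |c| ≤ 1/Real.sqrt 2 := by
        have h1 : Real.sqrt (c^2) ≤ Real.sqrt (1/2) := Real.sqrt_le_sqrt (by linarith)
        rw [Real.sqrt_sq_eq_abs] at h1
        have h2 : Real.sqrt (1/2) = 1 / Real.sqrt 2 := by
          rw [one_div, one_div, Real.sqrt_inv]
        linarith
      calc x * |c| ≤ x * (1/Real.sqrt 2) := by apply mul_le_mul_of_nonneg_left hc hx
        _ = x / Real.sqrt 2 := by ring
    have hcosh : Real.cosh (x*c) ≤ Real.cosh (x / Real.sqrt 2) := by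
      rw [Real.cosh_le_cosh]
      rwa [abs_of_nonneg (by positivity : (0:ℝ) ≤ x / Real.sqrt 2)]
    gcongr

noncomputable def J2n1 (n : ℕ) (x : ℝ) : ℝ :=
  -(1 / (2 * n + 1)) * ∑ k ∈ Finset.Icc 1 (2 * n + 1),
      (Real.tanh (x * Real.cos (k * π / (2 * n + 1))) / Real.cos (k * π / (2 * n + 1))) *
        Real.cos (2 * k * π / (2 * n + 1))

lemma J_hasDerivAt (n : ℕ) (x : ℝ) :
    HasDerivAt (J2n1 n)
      (-(1 / (2 * (n:ℝ) + 1)) * ∑ k ∈ Finset.Icc 1 (2 * n + 1),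
        (1 / Real.cosh (x * Real.cos (k * π / (2 * (n:ℝ) + 1))) ^ 2) *
          Real.cos (2 * k * π / (2 * (n:ℝ) + 1))) x := by
  have h : HasDerivAt (fun x : ℝ => -(1 / (2 * (n:ℝ) + 1)) *
      ∑ k ∈ Finset.Icc 1 (2 * n + 1),
      (Real.tanh (x * Real.cos (k * π / (2 * (n:ℝ) + 1))) / Real.cos (k * π / (2 * (n:ℝ) + 1))) *
        Real.cos (2 * k * π / (2 * (n:ℝ) + 1)))
      (-(1 / (2 * (n:ℝ) + 1)) * ∑ k ∈ Finset.Icc 1 (2 * n + 1),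
        ((1 / Real.cosh (x * Real.cos (k * π / (2 * (n:ℝ) + 1))) ^ 2) *
          Real.cos (k * π / (2 * (n:ℝ) + 1)) / Real.cos (k * π / (2 * (n:ℝ) + 1))) *
          Real.cos (2 * k * π / (2 * (n:ℝ) + 1))) x := by
    apply HasDerivAt.const_mul
    apply HasDerivAt.fun_sum
    intro k hk
    set c := Real.cos (k * π / (2 * (n:ℝ) + 1)) with hc
    have h1 : HasDerivAt (fun y : ℝ => y * c) (1 * c) x := (hasDerivAt_id x).mul_const c
    have h2 : HasDerivAt (fun y : ℝ => Real.tanh (y * c))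
        (1 / Real.cosh (x * c) ^ 2 * (1 * c)) x :=
      (tanh_hasDerivAt (x * c)).comp x h1 (h₂ := Real.tanh)
    have h3 := (h2.div_const c).mul_const (Real.cos (2 * k * π / (2 * (n:ℝ) + 1)))
    refine h3.congr_deriv ?_
    ring
  have heq : ∀ k ∈ Finset.Icc 1 (2 * n + 1),
      ((1 / Real.cosh (x * Real.cos (k * π / (2 * (n:ℝ) + 1))) ^ 2) *
          Real.cos (k * π / (2 * (n:ℝ) + 1)) / Real.cos (k * π / (2 * (n:ℝ) + 1))) *
          Real.cos (2 * k * π / (2 * (n:ℝ) + 1)) =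
      (1 / Real.cosh (x * Real.cos (k * π / (2 * (n:ℝ) + 1))) ^ 2) *
          Real.cos (2 * k * π / (2 * (n:ℝ) + 1)) := by
    intro k hk
    have hck := cos_ne_zero_aux n k
    field_simp
  rw [Finset.sum_congr rfl heq] at h
  exact h

theorem J2n1_monotone (n : ℕ) (hn : 1 ≤ n) :
    MonotoneOn (J2n1 n) (Set.Ici (0 : ℝ)) ∧
    ∀ x : ℝ, 0 ≤ x →
      (2 * n + 1) * deriv (J2n1 n) x ≥
          -(1 / Real.cosh x ^ 2) + 1 / Real.cosh (x / Real.sqrt 2) ^ 2 ∧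
      (0 : ℝ) ≤ -(1 / Real.cosh x ^ 2) + 1 / Real.cosh (x / Real.sqrt 2) ^ 2 := by
  have hNpos : (0:ℝ) < 2 * (n:ℝ) + 1 := by positivity
  have hNne : (2*(n:ℝ)+1) ≠ 0 := ne_of_gt hNpos
  have hs2 : (0:ℝ) < Real.sqrt 2 := by positivity
  have main : ∀ x : ℝ, 0 ≤ x →
      (2 * (n:ℝ) + 1) * deriv (J2n1 n) x ≥
          -(1 / Real.cosh x ^ 2) + 1 / Real.cosh (x / Real.sqrt 2) ^ 2 ∧
      (0 : ℝ) ≤ -(1 / Real.cosh x ^ 2) + 1 / Real.cosh (x / Real.sqrt 2) ^ 2 := by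
    intro x hx
    have hA : (0:ℝ) ≤ -(1 / Real.cosh x ^ 2) + 1 / Real.cosh (x / Real.sqrt 2) ^ 2 := by
      have hcosh : Real.cosh (x / Real.sqrt 2) ≤ Real.cosh x := by
        rw [Real.cosh_le_cosh, abs_of_nonneg (by positivity), abs_of_nonneg hx]
        rw [div_le_iff₀ hs2]
        nlinarith [Real.sq_sqrt (show (0:ℝ) ≤ 2 by norm_num), Real.sqrt_nonneg 2]
      have h1 : (0:ℝ) < Real.cosh (x / Real.sqrt 2) := Real.cosh_pos _
      have h2 : 1 / Real.cosh x ^ 2 ≤ 1 / Real.cosh (x / Real.sqrt 2) ^ 2 := by gcongr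
      linarith
    refine ⟨?_, hA⟩
    have hd := (J_hasDerivAt n x).deriv
    rw [hd]
    set f : ℕ → ℝ := fun k => (1 / Real.cosh (x * Real.cos (k * π / (2 * (n:ℝ) + 1))) ^ 2) *
          Real.cos (2 * k * π / (2 * (n:ℝ) + 1)) with hf
    have hsplit : ∑ k ∈ Finset.Icc 1 (2*n+1), f k
        = (∑ k ∈ Finset.Icc 1 (2*n), f k) + f (2*n+1) :=
      Finset.sum_Icc_succ_top (by omega) f
    have hlast : f (2*n+1) = 1 / Real.cosh x ^ 2 := by
      simp only [hf]
      have e1 : ((2*n+1 : ℕ) : ℝ) * π / (2 * (n:ℝ) + 1) = π := by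
        push_cast; field_simp
      have e2 : 2 * ((2*n+1 : ℕ) : ℝ) * π / (2 * (n:ℝ) + 1) = 2 * π := by
        push_cast; field_simp
      rw [e1, e2, Real.cos_pi, Real.cos_two_pi, mul_neg_one, Real.cosh_neg, mul_one]
    have hbound : ∀ k ∈ Finset.Icc 1 (2*n), f k ≤
        Real.cos (2 * k * π / (2 * (n:ℝ) + 1)) * (1 / Real.cosh (x / Real.sqrt 2) ^ 2) := by
      intro k hk
      simp only [hf]
      set c := Real.cos ((k:ℝ) * π / (2 * (n:ℝ) + 1)) with hc
      have hdform : Real.cos (2 * (k:ℝ) * π / (2 * (n:ℝ) + 1)) = 2 * c^2 - 1 := by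
        have e3 : 2 * (k:ℝ) * π / (2 * (n:ℝ) + 1) = 2 * ((k:ℝ) * π / (2 * (n:ℝ) + 1)) := by
          ring
        rw [e3, Real.cos_two_mul]
      rw [hdform, mul_comm]
      exact key_ineq x c hx
    have hsum_le : ∑ k ∈ Finset.Icc 1 (2*n), f k
        ≤ -(1 / Real.cosh (x/Real.sqrt 2) ^ 2) := by
      calc ∑ k ∈ Finset.Icc 1 (2*n), f k
          ≤ ∑ k ∈ Finset.Icc 1 (2*n), Real.cos (2 * k * π / (2 * (n:ℝ) + 1)) *
              (1 / Real.cosh (x / Real.sqrt 2) ^ 2) := Finset.sum_le_sum hbound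
        _ = (∑ k ∈ Finset.Icc 1 (2*n), Real.cos (2 * k * π / (2 * (n:ℝ) + 1))) *
              (1 / Real.cosh (x / Real.sqrt 2) ^ 2) := (Finset.sum_mul _ _ _).symm
        _ = -(1 / Real.cosh (x/Real.sqrt 2) ^ 2) := by rw [sum_cos_Icc n hn]; ring
    rw [hsplit, hlast]
    have heval : (2*(n:ℝ)+1) * (-(1/(2*(n:ℝ)+1)) *
        ((∑ k ∈ Finset.Icc 1 (2*n), f k) + 1/Real.cosh x ^ 2))
        = -(∑ k ∈ Finset.Icc 1 (2*n), f k) - 1/Real.cosh x ^ 2 := by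
      field_simp
      ring
    rw [heval]
    linarith
  refine ⟨?_, main⟩
  have hdiffAll : Differentiable ℝ (J2n1 n) := fun x => (J_hasDerivAt n x).differentiableAt
  apply monotoneOn_of_deriv_nonneg (convex_Ici 0) hdiffAll.continuous.continuousOn
    hdiffAll.differentiableOn
  intro x hx
  rw [interior_Ici] at hx
  have hx0 : 0 ≤ x := le_of_lt hx
  obtain ⟨h1, h2⟩ := main x hx0
  nlinarith [h1, h2, hNpos]
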